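/- arXiv:1911.02328 — 2 statements merged into one kernel-verified Lean document; each statement's English description precedes it below -/
import Mathlib

section
/- Let R be a Dedekind domain with torsion ideal class group which has the almost Dirichlet property and is power separated, and suppose there are infinitely many maximal ideals P of R for which there exists an integer n_P ≥ 1 such that the natural map from the unit group U(R) to R/P^{n_P} is injective. Then Λ₁(R) is the trivial group, and Λ(R) is isomorphic to U(R). -/
open Polynomial Filter

noncomputable section

/-- The Golomb space of a domain: the nonzero elements. -/
abbrev GolombSpace (R : Type*) [CommRing R] := {x : R // x ≠ 0}

/-- The Golomb topology: generated by coprime cosets `x + I`. -/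
instance golombTopology (R : Type*) [CommRing R] : TopologicalSpace (GolombSpace R) :=
  TopologicalSpace.generateFrom
    {S : Set (GolombSpace R) | ∃ (x : R) (I : Ideal R), x ≠ 0 ∧ I ≠ ⊥ ∧
      Ideal.span {x} ⊔ I = ⊤ ∧ S = {y : GolombSpace R | ∃ i ∈ I, (y : R) = x + i}}

/-- `G_n(R)`: nonzero elements contained in exactly `n` maximal ideals. -/
def golombGn (R : Type*) [CommRing R] (n : ℕ) : Set (GolombSpace R) :=
  {x | ∃ Δ : Finset (Ideal R), Δ.card = n ∧ (∀ P ∈ Δ, P.IsMaximal) ∧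
    (∀ P : Ideal R, P.IsMaximal → ((x : R) ∈ P ↔ P ∈ Δ))}

/-- The `P`-topology on `R ∖ P`, generated by the cosets `a + Pⁿ`, `n ≥ 1`. -/
instance padicCosetTopology {R : Type*} [CommRing R] (P : Ideal R) :
    TopologicalSpace {x : R // x ∉ P} :=
  TopologicalSpace.generateFrom
    {S : Set {x : R // x ∉ P} | ∃ (a : R) (n : ℕ), a ∉ P ∧ 1 ≤ n ∧
      S = {y : {x : R // x ∉ P} | ∃ b ∈ P ^ n, (y : R) = a + b}}

/-- Convergence of a sequence to `l` in the `P`-topology on `R ∖ P`. -/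
def PTendsto {R : Type*} [CommRing R] (P : Ideal R) (s : ℕ → R) (l : R) : Prop :=
  ∃ (hl : l ∉ P) (hs : ∀ n, s n ∉ P),
    Filter.Tendsto (fun n => (⟨s n, hs n⟩ : {x : R // x ∉ P})) Filter.atTop
      (nhds (⟨l, hl⟩ : {x : R // x ∉ P}))

/-- `⟨a⟩ = { u·aⁿ : u a unit, n ≥ 1 }`, as a subset of the Golomb space. -/
def golombPow {R : Type*} [CommRing R] (a : R) : Set (GolombSpace R) :=
  {y | ∃ (u : R) (n : ℕ), IsUnit u ∧ 1 ≤ n ∧ (y : R) = u * a ^ n}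


/-- An element of a domain is almost prime if it is irreducible and contained in a unique
maximal ideal. -/
def AlmostPrime {R : Type*} [CommRing R] (b : R) : Prop :=
  Irreducible b ∧ ∃! P : Ideal R, P.IsMaximal ∧ b ∈ P

/-- `R` has the almost Dirichlet property if every coprime coset `x + I` contains an almost
prime element. -/
def HasAlmostDirichlet (R : Type*) [CommRing R] : Prop :=
  ∀ (x : R) (I : Ideal R), x ≠ 0 → I ≠ ⊥ → Ideal.span {x} ⊔ I = ⊤ →
    ∃ b : R, (∃ i ∈ I, b = x + i) ∧ AlmostPrime b

/-- `G_{{P}}(R)`: the nonzero elements contained in the maximal ideal `P` and in no other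
maximal ideal. -/
def golombGsingle {R : Type*} [CommRing R] (P : Ideal R) : Set (GolombSpace R) :=
  {x | (x : R) ∈ P ∧ ∀ Q : Ideal R, Q.IsMaximal → (x : R) ∈ Q → Q = P}

/-- `R` is power separated if for every maximal ideal `P` and every `b ∈ G_{{P}}(R)`, the
closure of `⟨b⟩` in the Golomb topology meets `G_{{P}}(R)` exactly in `⟨b⟩`. -/
def PowerSeparated (R : Type*) [CommRing R] : Prop :=
  ∀ P : Ideal R, P.IsMaximal → ∀ b : GolombSpace R, b ∈ golombGsingle P →
    closure (golombPow (b : R)) ∩ golombGsingle P = golombPow (b : R)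

/-- `Λ(R)`: the group of self-homeomorphisms `h` of the Golomb space `G(R)` such that
`h(P ∖ {0}) = P ∖ {0}` for every prime ideal `P` of `R`, realized as the subgroup of
permutations of `G(R)` that are continuous with continuous inverse and preserve the
nonzero part of every prime ideal. -/
def golombLambda (R : Type*) [CommRing R] : Subgroup (Equiv.Perm (GolombSpace R)) where
  carrier := {f | Continuous f ∧ Continuous f.symm ∧
    ∀ P : Ideal R, P.IsPrime →
      f '' {x : GolombSpace R | (x : R) ∈ P} = {x : GolombSpace R | (x : R) ∈ P}}
  one_mem' := by
    refine ⟨continuous_id, continuous_id, fun P _ => ?_⟩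
    show _root_.id '' _ = _
    simp
  mul_mem' := by
    rintro a b ⟨ha1, ha2, ha3⟩ ⟨hb1, hb2, hb3⟩
    have hab : ⇑(a * b) = ⇑a ∘ ⇑b := rfl
    have hab' : ⇑(a * b).symm = ⇑b.symm ∘ ⇑a.symm := rfl
    refine ⟨?_, ?_, fun P hP => ?_⟩
    · rw [hab]; exact ha1.comp hb1
    · rw [hab']; exact hb2.comp ha2
    · rw [hab, Set.image_comp, hb3 P hP, ha3 P hP]
  inv_mem' := by
    rintro a ⟨ha1, ha2, ha3⟩
    have h1 : ⇑(a⁻¹) = ⇑a.symm := rfl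
    have h2 : ⇑(a⁻¹).symm = ⇑a := rfl
    refine ⟨?_, ?_, fun P hP => ?_⟩
    · rw [h1]; exact ha2
    · rw [h2]; exact ha1
    · rw [h1]
      conv_lhs => rw [← ha3 P hP]
      exact Equiv.symm_image_image a _

/-- `Λ₁(R)`: the subgroup of `Λ(R)` consisting of those self-homeomorphisms fixing `1`. -/
def golombLambdaOne (R : Type*) [CommRing R] [Nontrivial R] :
    Subgroup (Equiv.Perm (GolombSpace R)) where
  carrier := {f | f ∈ golombLambda R ∧
    f (⟨1, one_ne_zero⟩ : GolombSpace R) = (⟨1, one_ne_zero⟩ : GolombSpace R)}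
  one_mem' := ⟨(golombLambda R).one_mem, rfl⟩
  mul_mem' := by
    rintro a b ⟨ha, ha1⟩ ⟨hb, hb1⟩
    refine ⟨(golombLambda R).mul_mem ha hb, ?_⟩
    show a (b _) = _
    rw [hb1, ha1]
  inv_mem' := by
    rintro a ⟨ha, ha1⟩
    refine ⟨(golombLambda R).inv_mem ha, ?_⟩
    show a.symm _ = _
    exact (Equiv.symm_apply_eq a).mpr ha1.symm

namespace GolombAux

open Ideal

variable {R : Type*} [CommRing R]

/-- The coset `a + I` as a subset of the Golomb space. -/
def coset (a : R) (I : Ideal R) : Set (GolombSpace R) :=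
  {y : GolombSpace R | ∃ i ∈ I, (y : R) = a + i}

lemma mem_coset_iff {a : R} {I : Ideal R} {y : GolombSpace R} :
    y ∈ coset a I ↔ (y : R) - a ∈ I := by
  constructor
  · rintro ⟨i, hi, hy⟩
    simpa [hy] using hi
  · intro h
    exact ⟨(y : R) - a, h, by ring⟩

lemma cop_iff {x : R} {I : Ideal R} :
    Ideal.span {x} ⊔ I = ⊤ ↔ ∀ M : Ideal R, M.IsMaximal → x ∈ M → ¬ I ≤ M := by
  constructor
  · intro h M hM hx hIM
    have : Ideal.span {x} ⊔ I ≤ M := by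
      refine sup_le ?_ hIM
      rwa [Ideal.span_le, Set.singleton_subset_iff]
    rw [h] at this
    exact hM.ne_top (top_le_iff.mp this)
  · intro h
    by_contra hne
    obtain ⟨M, hM, hle⟩ := Ideal.exists_le_maximal _ hne
    exact h M hM (hle (le_sup_left (b := I) (Ideal.subset_span rfl))) (le_trans le_sup_right hle)

lemma cop_shift {x a : R} {I : Ideal R} (h : Ideal.span {a} ⊔ I = ⊤) (hx : x - a ∈ I) :
    Ideal.span {x} ⊔ I = ⊤ := by
  rw [cop_iff] at h ⊢
  intro M hM hxM hIM
  have : a ∈ M := by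
    have := hIM hx
    have : x - (x - a) ∈ M := M.sub_mem hxM (hIM hx)
    simpa using this
  exact h M hM this hIM

lemma cop_inf {x : R} {I J : Ideal R} (hI : Ideal.span {x} ⊔ I = ⊤)
    (hJ : Ideal.span {x} ⊔ J = ⊤) : Ideal.span {x} ⊔ (I ⊓ J) = ⊤ := by
  rw [cop_iff] at hI hJ ⊢
  intro M hM hxM hIM
  have hmul : I * J ≤ M := le_trans Ideal.mul_le_inf hIM
  rcases (Ideal.IsPrime.mul_le (hM.isPrime)).mp hmul with h | h
  · exact hI M hM hxM h
  · exact hJ M hM hxM h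

lemma inf_ne_bot [IsDomain R] {I J : Ideal R} (hI : I ≠ ⊥) (hJ : J ≠ ⊥) : I ⊓ J ≠ ⊥ := by
  intro h
  have := Ideal.mul_le_inf (I := I) (J := J)
  rw [h, le_bot_iff, Ideal.mul_eq_bot] at this
  tauto

lemma crt {A B : Ideal R} (h : A ⊔ B = ⊤) (a b : R) : ∃ s : R, s - a ∈ A ∧ s - b ∈ B := by
  have h1 : (1 : R) ∈ A ⊔ B := by rw [h]; trivial
  obtain ⟨e, he, f, hf, hef⟩ := Submodule.mem_sup.mp h1
  refine ⟨a * f + b * e, ?_, ?_⟩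
  · have h2 : a * f + b * e - a = (b - a) * e := by linear_combination a * hef
    rw [h2]
    exact A.mul_mem_left (b - a) he
  · have h2 : a * f + b * e - b = (a - b) * f := by linear_combination b * hef
    rw [h2]
    exact B.mul_mem_left (a - b) hf

lemma pow_congr {K : Ideal R} {a b : R} (h : a - b ∈ K) (m : ℕ) : a ^ m - b ^ m ∈ K := by
  have := Ideal.Quotient.eq (I := K) (x := a) (y := b) |>.mpr h
  have : (Ideal.Quotient.mk K) (a ^ m) = (Ideal.Quotient.mk K) (b ^ m) := by
    rw [map_pow, map_pow, this]
  exact Ideal.Quotient.eq.mp this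

lemma sub_mem_of_mul_mem {z u v : R} {K : Ideal R} (hz : Ideal.span {z} ⊔ K = ⊤)
    (h : (u - v) * z ∈ K) : u - v ∈ K := by
  have h1 : (1 : R) ∈ Ideal.span {z} ⊔ K := by rw [hz]; trivial
  obtain ⟨e, he, f, hf, hef⟩ := Submodule.mem_sup.mp h1
  obtain ⟨c, hc⟩ := Ideal.mem_span_singleton'.mp he
  have : u - v = (u - v) * z * c + (u - v) * f := by
    rw [mul_comm c z] at hc
    calc u - v = (u - v) * (e + f) := by rw [hef, mul_one]
    _ = (u - v) * z * c + (u - v) * f := by rw [← hc]; ring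
  rw [this]
  exact K.add_mem (K.mul_mem_right c h) (K.mul_mem_left _ hf)

end GolombAux
namespace GolombAux

variable {R : Type*} [CommRing R]

/-- The generating family of the Golomb topology. -/
def gset (R : Type*) [CommRing R] : Set (Set (GolombSpace R)) :=
  {S : Set (GolombSpace R) | ∃ (x : R) (I : Ideal R), x ≠ 0 ∧ I ≠ ⊥ ∧
      Ideal.span {x} ⊔ I = ⊤ ∧ S = {y : GolombSpace R | ∃ i ∈ I, (y : R) = x + i}}

lemma golombTopology_eq : (golombTopology R) = TopologicalSpace.generateFrom (gset R) := rfl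

lemma coset_open {a : R} {I : Ideal R} (ha : a ≠ 0) (hI : I ≠ ⊥)
    (h : Ideal.span {a} ⊔ I = ⊤) : IsOpen (coset a I) := by
  rw [golombTopology_eq]
  exact TopologicalSpace.isOpen_generateFrom_of_mem ⟨a, I, ha, hI, h, rfl⟩

lemma self_mem_coset (a : GolombSpace R) (I : Ideal R) : a ∈ coset (a : R) I :=
  mem_coset_iff.mpr (by simpa using I.zero_mem)

lemma coset_subset {a : R} {I : Ideal R} {x : GolombSpace R} (hx : x ∈ coset a I) :
    coset (x : R) I ⊆ coset a I := by
  intro y hy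
  rw [mem_coset_iff] at hx hy ⊢
  have : (y : R) - a = ((y : R) - x) + ((x : R) - a) := by ring
  rw [this]
  exact I.add_mem hy hx

lemma nbhd_basis_aux [IsDomain R] {U : Set (GolombSpace R)}
    (hU : TopologicalSpace.GenerateOpen (gset R) U) :
    ∀ x : GolombSpace R, x ∈ U →
    ∃ J : Ideal R, J ≠ ⊥ ∧ Ideal.span {(x : R)} ⊔ J = ⊤ ∧ coset (x : R) J ⊆ U := by
  induction hU with
  | basic S hS =>
      intro x hx
      obtain ⟨a, I, ha, hI, hcop, rfl⟩ := hS
      have hx' : x ∈ coset a I := hx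
      exact ⟨I, hI, cop_shift hcop (mem_coset_iff.mp hx'), coset_subset hx'⟩
  | univ => exact fun x _ => ⟨⊤, top_ne_bot, by simp, fun y _ => trivial⟩
  | inter s t hs ht ihs iht =>
      intro x hx
      obtain ⟨J₁, hJ₁, hcop₁, hsub₁⟩ := ihs x hx.1
      obtain ⟨J₂, hJ₂, hcop₂, hsub₂⟩ := iht x hx.2
      refine ⟨J₁ ⊓ J₂, inf_ne_bot hJ₁ hJ₂, cop_inf hcop₁ hcop₂, fun y hy => ?_⟩
      rw [mem_coset_iff] at hy
      exact ⟨hsub₁ (mem_coset_iff.mpr (inf_le_left (b := J₂) hy)),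
        hsub₂ (mem_coset_iff.mpr (inf_le_right (a := J₁) hy))⟩
  | sUnion S hS ih =>
      intro x hx
      obtain ⟨s, hsS, hxs⟩ := hx
      obtain ⟨J, hJ, hcop, hsub⟩ := ih s hsS x hxs
      exact ⟨J, hJ, hcop, fun y hy => ⟨s, hsS, hsub hy⟩⟩

lemma nbhd_basis [IsDomain R] {U : Set (GolombSpace R)} (hU : IsOpen U)
    {x : GolombSpace R} (hx : x ∈ U) :
    ∃ J : Ideal R, J ≠ ⊥ ∧ Ideal.span {(x : R)} ⊔ J = ⊤ ∧ coset (x : R) J ⊆ U := by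
  rw [golombTopology_eq] at hU
  exact nbhd_basis_aux hU x hx

section Lambda

variable {h : Equiv.Perm (GolombSpace R)}

lemma lam_mem_iff (hmem : h ∈ golombLambda R) {P : Ideal R} (hP : P.IsPrime)
    (x : GolombSpace R) : ((h x : GolombSpace R) : R) ∈ P ↔ (x : R) ∈ P := by
  obtain ⟨-, -, h3⟩ := hmem
  have himg := h3 P hP
  constructor
  · intro hx
    have : h x ∈ h '' {y : GolombSpace R | (y : R) ∈ P} := by rw [himg]; exact hx
    obtain ⟨w, hw, hwx⟩ := this
    have : w = x := h.injective hwx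
    rwa [this] at hw
  · intro hx
    have : h x ∈ h '' {y : GolombSpace R | (y : R) ∈ P} := ⟨x, hx, rfl⟩
    rwa [himg] at this

lemma lam_cop_iff (hmem : h ∈ golombLambda R) (x : GolombSpace R) {I : Ideal R} :
    Ideal.span {((h x : GolombSpace R) : R)} ⊔ I = ⊤ ↔ Ideal.span {(x : R)} ⊔ I = ⊤ := by
  rw [cop_iff, cop_iff]
  constructor
  · intro hc M hM hxM hIM
    exact hc M hM ((lam_mem_iff hmem hM.isPrime x).mpr hxM) hIM
  · intro hc M hM hxM hIM
    exact hc M hM ((lam_mem_iff hmem hM.isPrime x).mp hxM) hIM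

/-- Continuity transfer: congruences on inputs force congruences on outputs. -/
lemma transfer [IsDomain R] (hmem : h ∈ golombLambda R) (z : GolombSpace R) {I : Ideal R}
    (hI : I ≠ ⊥) (hcop : Ideal.span {(z : R)} ⊔ I = ⊤) :
    ∃ J : Ideal R, J ≠ ⊥ ∧ Ideal.span {(z : R)} ⊔ J = ⊤ ∧
      ∀ y : GolombSpace R, (y : R) - (z : R) ∈ J → ((h y : GolombSpace R) : R) - (h z : R) ∈ I := by
  have hcont := hmem.1
  have hcophz : Ideal.span {((h z : GolombSpace R) : R)} ⊔ I = ⊤ :=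
    (lam_cop_iff hmem z).mpr hcop
  have hopen : IsOpen (coset ((h z : GolombSpace R) : R) I) := coset_open (h z).2 hI hcophz
  have hpre : IsOpen (⇑h ⁻¹' coset ((h z : GolombSpace R) : R) I) := hopen.preimage hcont
  have hzmem : z ∈ ⇑h ⁻¹' coset ((h z : GolombSpace R) : R) I := self_mem_coset (h z) I
  obtain ⟨J, hJ, hcopJ, hsub⟩ := nbhd_basis hpre hzmem
  refine ⟨J, hJ, hcopJ, fun y hy => ?_⟩
  have : y ∈ coset (z : R) J := mem_coset_iff.mpr hy
  have := hsub this
  exact mem_coset_iff.mp this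

end Lambda

end GolombAux
namespace GolombAux

open UniqueFactorizationMonoid

variable {R : Type*} [CommRing R] [IsDomain R] [IsDedekindDomain R]

lemma span_eq_pow {P : Ideal R} (hP : P.IsMaximal) {z : R} (hz : z ≠ 0) (hzP : z ∈ P)
    (huniq : ∀ M : Ideal R, M.IsMaximal → z ∈ M → M = P) :
    ∃ a : ℕ, 1 ≤ a ∧ Ideal.span {z} = P ^ a := by
  set I := Ideal.span {z} with hIdef
  have hI0 : I ≠ ⊥ := by
    rw [hIdef, ne_eq, Ideal.span_singleton_eq_bot]; exact hz
  have hall : ∀ q ∈ normalizedFactors I, q = P := by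
    intro q hq
    have hqprime : Prime q := prime_of_normalized_factor q hq
    have hqIsPrime : q.IsPrime := Ideal.isPrime_of_prime hqprime
    have hqne : q ≠ ⊥ := hqprime.ne_zero
    have hle : I ≤ q := Ideal.dvd_iff_le.mp (dvd_of_mem_normalizedFactors hq)
    have hzq : z ∈ q := hle (Ideal.subset_span rfl)
    exact huniq q (hqIsPrime.isMaximal hqne) hzq
  have hrep : normalizedFactors I = Multiset.replicate (Multiset.card (normalizedFactors I)) P :=
    Multiset.eq_replicate.mpr ⟨rfl, hall⟩
  have hprod : I = P ^ Multiset.card (normalizedFactors I) := by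
    conv_lhs => rw [← prod_normalizedFactors_eq_self hI0, hrep, Multiset.prod_replicate]
  refine ⟨Multiset.card (normalizedFactors I), ?_, hprod⟩
  by_contra hcard
  have h0 : Multiset.card (normalizedFactors I) = 0 := by omega
  rw [h0, pow_zero, Ideal.one_eq_top] at hprod
  have : z ∈ I := Ideal.subset_span rfl
  have hzu : IsUnit z := by
    rw [← Ideal.span_singleton_eq_top, ← hIdef, hprod]
  exact hP.ne_top (P.eq_top_of_isUnit_mem hzP hzu)

lemma dvd_or_dvd_of_single {P : Ideal R} (hP : P.IsMaximal) {y w : R}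
    (hy : y ≠ 0) (hyP : y ∈ P) (hyu : ∀ M : Ideal R, M.IsMaximal → y ∈ M → M = P)
    (hw : w ≠ 0) (hwP : w ∈ P) (hwu : ∀ M : Ideal R, M.IsMaximal → w ∈ M → M = P) :
    y ∣ w ∨ w ∣ y := by
  obtain ⟨a, -, ha⟩ := span_eq_pow hP hw hwP hwu
  obtain ⟨c, -, hc⟩ := span_eq_pow hP hy hyP hyu
  rcases le_total c a with hac | hac
  · left
    rw [← Ideal.span_singleton_le_span_singleton, ha, hc]
    exact Ideal.pow_le_pow_right hac
  · right
    rw [← Ideal.span_singleton_le_span_singleton, ha, hc]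
    exact Ideal.pow_le_pow_right hac

/-- Any element supported exactly at `P` is a unit times a power of a given almost prime
supported at `P`. -/
lemma eq_unit_mul_pow {P : Ideal R} (hP : P.IsMaximal) {y : R} (hy : AlmostPrime y)
    (hyP : y ∈ P) (hyuniq : ∀ M : Ideal R, M.IsMaximal → y ∈ M → M = P) (w : R) :
    w ≠ 0 → w ∈ P → (∀ M : Ideal R, M.IsMaximal → w ∈ M → M = P) →
      ∃ (u : R) (m : ℕ), IsUnit u ∧ 1 ≤ m ∧ w = u * y ^ m := by
  have hy0 : y ≠ 0 := hy.1.ne_zero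
  refine wellFounded_dvdNotUnit.induction
    (C := fun w => w ≠ 0 → w ∈ P → (∀ M : Ideal R, M.IsMaximal → w ∈ M → M = P) →
      ∃ (u : R) (m : ℕ), IsUnit u ∧ 1 ≤ m ∧ w = u * y ^ m) w ?_
  intro w ih hw0 hwP hwuniq
  rcases dvd_or_dvd_of_single hP hy0 hyP hyuniq hw0 hwP hwuniq with hdvd | hdvd
  · obtain ⟨w', hww⟩ := hdvd
    by_cases hw' : IsUnit w'
    · exact ⟨w', 1, hw', le_refl 1, by rw [hww]; ring⟩
    · have hw'0 : w' ≠ 0 := by rintro rfl; rw [hww, mul_zero] at hw0; exact hw0 rfl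
      have hw'uniq : ∀ M : Ideal R, M.IsMaximal → w' ∈ M → M = P := by
        intro M hM hmem
        exact hwuniq M hM (by rw [hww]; exact M.mul_mem_left y hmem)
      have hw'P : w' ∈ P := by
        have : Ideal.span {w'} ≠ ⊤ := by
          rw [ne_eq, Ideal.span_singleton_eq_top]; exact hw'
        obtain ⟨M, hM, hle⟩ := Ideal.exists_le_maximal _ this
        have : w' ∈ M := hle (Ideal.subset_span rfl)
        rwa [hw'uniq M hM this] at this
      have hdnu : DvdNotUnit w' w := ⟨hw'0, y, hy.1.not_isUnit, by rw [hww]; ring⟩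
      obtain ⟨u, m, hu, hm, he⟩ := ih w' hdnu hw'0 hw'P hw'uniq
      exact ⟨u, m + 1, hu, by omega, by rw [hww, he]; ring⟩
  · obtain ⟨v, hvy⟩ := hdvd
    rcases hy.1.isUnit_or_isUnit hvy with hu | hu
    · exact absurd (P.eq_top_of_isUnit_mem hwP hu) hP.ne_top
    · refine ⟨(hu.unit⁻¹ : Rˣ), 1, Units.isUnit _, le_refl 1, ?_⟩
      have hvu : v * (hu.unit⁻¹ : Rˣ) = 1 := hu.mul_val_inv
      rw [pow_one]
      calc w = (v * (hu.unit⁻¹ : Rˣ)) * w := by rw [hvu, one_mul]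
        _ = (hu.unit⁻¹ : Rˣ) * (w * v) := by ring
        _ = (hu.unit⁻¹ : Rˣ) * y := by rw [← hvy]
  
end GolombAux
namespace GolombAux

variable {R : Type*} [CommRing R] [IsDomain R] [IsDedekindDomain R]
variable {h : Equiv.Perm (GolombSpace R)}

lemma ap_single {b : R} (hb : AlmostPrime b) :
    ∃ P : Ideal R, P.IsMaximal ∧ b ∈ P ∧ ∀ M : Ideal R, M.IsMaximal → b ∈ M → M = P := by
  obtain ⟨P, ⟨hP, hbP⟩, huniq⟩ := hb.2
  exact ⟨P, hP, hbP, fun M hM hbM => (huniq M ⟨hM, hbM⟩)⟩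

lemma h_mem_closure_pow (hmem : h ∈ golombLambda R) (had : HasAlmostDirichlet R)
    (x : GolombSpace R) : h x ∈ closure (golombPow (x : R)) := by
  rw [mem_closure_iff]
  intro o ho hho
  obtain ⟨K, hK0, hKcop, hKsub⟩ := nbhd_basis ho hho
  have hKx : Ideal.span {(x : R)} ⊔ K = ⊤ := (lam_cop_iff hmem x).mp hKcop
  obtain ⟨J, hJ0, hJcop, htrans⟩ := transfer hmem x hK0 hKx
  have hJK0 : J ⊓ K ≠ ⊥ := inf_ne_bot hJ0 hK0
  have hJKcop := cop_inf hJcop hKx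
  obtain ⟨b, ⟨i, hiJK, hbi⟩, hbap⟩ := had (x : R) (J ⊓ K) x.2 hJK0 hJKcop
  have hb0 : b ≠ 0 := hbap.1.ne_zero
  set bb : GolombSpace R := ⟨b, hb0⟩ with hbbdef
  have hbx : (bb : R) - (x : R) ∈ J ⊓ K := by
    have : (bb : R) - (x : R) = i := by rw [hbbdef]; simp [hbi]
    rwa [this]
  obtain ⟨P, hPmax, hbP, hbuniq⟩ := ap_single hbap
  have hhb0 : ((h bb : GolombSpace R) : R) ≠ 0 := (h bb).2
  have hhbP : ((h bb : GolombSpace R) : R) ∈ P := (lam_mem_iff hmem hPmax.isPrime bb).mpr hbP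
  have hhbuniq : ∀ M : Ideal R, M.IsMaximal → ((h bb : GolombSpace R) : R) ∈ M → M = P :=
    fun M hM hmemM => hbuniq M hM ((lam_mem_iff hmem hM.isPrime bb).mp hmemM)
  obtain ⟨u, m, hu, hm, hhb⟩ := eq_unit_mul_pow hPmax hbap hbP hbuniq _ hhb0 hhbP hhbuniq
  have hxm0 : u * (x : R) ^ m ≠ 0 := mul_ne_zero hu.ne_zero (pow_ne_zero _ x.2)
  refine ⟨⟨u * (x : R) ^ m, hxm0⟩, ?_, u, m, hu, hm, rfl⟩
  apply hKsub
  rw [mem_coset_iff]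
  have h1 : ((h bb : GolombSpace R) : R) - ((h x : GolombSpace R) : R) ∈ K :=
    htrans bb ((inf_le_left : J ⊓ K ≤ J) hbx)
  have h2 : (x : R) ^ m - b ^ m ∈ K := by
    refine pow_congr ?_ m
    have := K.neg_mem ((inf_le_right : J ⊓ K ≤ K) hbx)
    simpa using this
  have h3 : (u * (x : R) ^ m : R) - ((h x : GolombSpace R) : R) =
      u * ((x : R) ^ m - b ^ m) + (((h bb : GolombSpace R) : R) - ((h x : GolombSpace R) : R)) := by
    rw [hhb]; ring
  rw [h3]
  exact K.add_mem (K.mul_mem_left u h2) h1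

lemma h_single_mem_pow (hmem : h ∈ golombLambda R) (had : HasAlmostDirichlet R)
    (hps : PowerSeparated R) {P : Ideal R} (hP : P.IsMaximal) {x : GolombSpace R}
    (hx : x ∈ golombGsingle P) : h x ∈ golombPow (x : R) := by
  have hcl := h_mem_closure_pow hmem had x
  have hhx : h x ∈ golombGsingle P :=
    ⟨(lam_mem_iff hmem hP.isPrime x).mpr hx.1,
      fun Q hQ hmemQ => hx.2 Q hQ ((lam_mem_iff hmem hQ.isPrime x).mp hmemQ)⟩
  have heq := hps P hP x hx
  rw [← heq]
  exact ⟨hcl, hhx⟩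

lemma h_single_unit (hmem : h ∈ golombLambda R) (had : HasAlmostDirichlet R)
    (hps : PowerSeparated R) {P : Ideal R} (hP : P.IsMaximal) {x : GolombSpace R}
    (hx : x ∈ golombGsingle P) : ∃ u : Rˣ, ((h x : GolombSpace R) : R) = u * (x : R) := by
  obtain ⟨u, m, hu, hm, hxm⟩ := h_single_mem_pow hmem had hps hP hx
  have hinv : h⁻¹ ∈ golombLambda R := (golombLambda R).inv_mem hmem
  have hhx : h x ∈ golombGsingle P :=
    ⟨(lam_mem_iff hmem hP.isPrime x).mpr hx.1,
      fun Q hQ hmemQ => hx.2 Q hQ ((lam_mem_iff hmem hQ.isPrime x).mp hmemQ)⟩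
  obtain ⟨u', m', hu', hm', hxm'⟩ := h_single_mem_pow hinv had hps hP hhx
  have hback : (h⁻¹ (h x)) = x := by simp
  rw [hback, hxm] at hxm'
  have hexp : (u * (x : R) ^ m) ^ m' = u ^ m' * (x : R) ^ (m * m') := by
    rw [mul_pow, ← pow_mul]
  have hkey : (x : R) = (u' * u ^ m') * (x : R) ^ (m * m') := by
    conv_lhs => rw [hxm']
    rw [hexp]; ring
  have hs1 : m * m' = 1 := by
    by_contra hs
    have h2le : 2 ≤ m * m' := by
      have := Nat.mul_le_mul hm hm'
      omega
    have hfac : (x : R) * (1 - (u' * u ^ m') * (x : R) ^ (m * m' - 1)) = 0 := by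
      have hpow : (x : R) ^ (m * m') = (x : R) * (x : R) ^ (m * m' - 1) := by
        conv_lhs => rw [show m * m' = (m * m' - 1) + 1 by omega]
        rw [pow_succ]; ring
      calc (x : R) * (1 - (u' * u ^ m') * (x : R) ^ (m * m' - 1))
          = (x : R) - (u' * u ^ m') * ((x : R) * (x : R) ^ (m * m' - 1)) := by ring
        _ = (x : R) - (u' * u ^ m') * (x : R) ^ (m * m') := by rw [← hpow]
        _ = 0 := by rw [← hkey]; ring
    rcases mul_eq_zero.mp hfac with hx0 | hx1
    · exact x.2 hx0
    · have hxunit : IsUnit (x : R) := by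
        refine IsUnit.of_mul_eq_one (a := (x : R)) ((u' * u ^ m') * (x : R) ^ (m * m' - 2)) ?_
        have : (x : R) * ((u' * u ^ m') * (x : R) ^ (m * m' - 2)) =
            (u' * u ^ m') * ((x : R) ^ (m * m' - 2) * (x : R)) := by ring
        rw [this, ← pow_succ, show m * m' - 2 + 1 = m * m' - 1 by omega]
        exact (sub_eq_zero.mp hx1).symm
      exact hP.ne_top (P.eq_top_of_isUnit_mem hx.1 hxunit)
  have hm1 : m = 1 := Nat.eq_one_of_mul_eq_one_right hs1
  refine ⟨hu.unit, ?_⟩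
  rw [hxm, hm1, pow_one, hu.unit_spec]

end GolombAux
namespace GolombAux

open UniqueFactorizationMonoid

variable {R : Type*} [CommRing R] [IsDomain R] [IsDedekindDomain R]
variable {h : Equiv.Perm (GolombSpace R)}

lemma supp_finite {z : R} (hz : z ≠ 0) : {M : Ideal R | M.IsMaximal ∧ z ∈ M}.Finite := by
  have hsub : {M : Ideal R | M.IsMaximal ∧ z ∈ M} ⊆
      {M : Ideal R | M ∈ normalizedFactors (Ideal.span {z})} := by
    rintro M ⟨hM, hzM⟩
    have hM0 : M ≠ ⊥ := by rintro rfl; exact hz hzM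
    have hspan0 : Ideal.span {z} ≠ 0 := by
      rw [Ideal.zero_eq_bot, ne_eq, Ideal.span_singleton_eq_bot]; exact hz
    have hprime : Prime M := Ideal.prime_of_isPrime hM0 hM.isPrime
    have hdvd : M ∣ Ideal.span {z} := Ideal.dvd_iff_le.mpr (by
      rw [Ideal.span_le, Set.singleton_subset_iff]; exact hzM)
    obtain ⟨q, hq, hassoc⟩ := exists_mem_normalizedFactors_of_dvd hspan0 hprime.irreducible hdvd
    rwa [associated_iff_eq.mp hassoc]
  exact Set.Finite.subset (Multiset.finite_toSet _) hsub

lemma cop_pow {Q : Ideal R} (hQ : Q.IsMaximal) {z : R} (hzQ : z ∉ Q) (n : ℕ) :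
    Ideal.span {z} ⊔ Q ^ n = ⊤ := by
  rw [cop_iff]
  intro M hM hzM hle
  by_cases hn : n = 0
  · rw [hn, pow_zero, Ideal.one_eq_top, top_le_iff] at hle
    exact hM.ne_top hle
  · have hQM : Q ≤ M := Ideal.IsPrime.le_of_pow_le (hP := hM.isPrime) hle
    rw [hQ.eq_of_le hM.ne_top hQM] at hzQ
    exact hzQ hzM

lemma pow_ne_bot' {Q : Ideal R} (hQ : Q ≠ ⊥) (n : ℕ) : Q ^ n ≠ ⊥ := by
  rw [← Ideal.zero_eq_bot] at hQ ⊢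
  exact pow_ne_zero n hQ

lemma unit_eq_of_cong {Q : Ideal R} (hQ : Q.IsMaximal) {n : ℕ}
    (hinj : Function.Injective fun u : Rˣ => Ideal.Quotient.mk (Q ^ n) (u : R))
    {z : R} (hzQ : z ∉ Q) {u u' : Rˣ} (hcong : (u : R) * z - (u' : R) * z ∈ Q ^ n) :
    u = u' := by
  have hfac : ((u : R) - (u' : R)) * z ∈ Q ^ n := by
    have : ((u : R) - (u' : R)) * z = (u : R) * z - (u' : R) * z := by ring
    rwa [this]
  have hsub : (u : R) - (u' : R) ∈ Q ^ n :=
    sub_mem_of_mul_mem (cop_pow hQ hzQ n) hfac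
  exact hinj (Ideal.Quotient.eq.mpr hsub)

lemma ne_bot_of_infinite_maximals {S : Set (Ideal R)} (hinf : S.Infinite)
    (hS : ∀ P ∈ S, P.IsMaximal) {M : Ideal R} (hM : M.IsMaximal) : M ≠ ⊥ := by
  rintro rfl
  have : S ⊆ {⊥} := by
    intro P hP
    have := hM.eq_of_le (hS P hP).ne_top bot_le
    simp [← this]
  exact hinf ((Set.finite_singleton ⊥).subset this)

/-- Approximation: `h z` is congruent to a unit multiple of `z` modulo any ideal coprime
to `z`. -/
lemma h_approx_unit (hmem : h ∈ golombLambda R) (had : HasAlmostDirichlet R)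
    (hps : PowerSeparated R) (z : GolombSpace R) {I : Ideal R} (hI : I ≠ ⊥)
    (hcop : Ideal.span {(z : R)} ⊔ I = ⊤) :
    ∃ u : Rˣ, ((h z : GolombSpace R) : R) - (u : R) * (z : R) ∈ I := by
  obtain ⟨J, hJ0, hJcop, htrans⟩ := transfer hmem z hI hcop
  have hJI0 : J ⊓ I ≠ ⊥ := inf_ne_bot hJ0 hI
  have hJIcop := cop_inf hJcop hcop
  obtain ⟨b, ⟨i, hiJI, hbi⟩, hbap⟩ := had (z : R) (J ⊓ I) z.2 hJI0 hJIcop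
  have hb0 : b ≠ 0 := hbap.1.ne_zero
  set bb : GolombSpace R := ⟨b, hb0⟩ with hbbdef
  have hbz : (bb : R) - (z : R) ∈ J ⊓ I := by
    have : (bb : R) - (z : R) = i := by rw [hbbdef]; simp [hbi]
    rwa [this]
  obtain ⟨P, hPmax, hbP, hbuniq⟩ := ap_single hbap
  have hbG : bb ∈ golombGsingle P := ⟨hbP, fun Q hQ hbQ => hbuniq Q hQ hbQ⟩
  obtain ⟨u, hub⟩ := h_single_unit hmem had hps hPmax hbG
  refine ⟨u, ?_⟩
  have h1 : ((h bb : GolombSpace R) : R) - ((h z : GolombSpace R) : R) ∈ I :=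
    htrans bb ((inf_le_left : J ⊓ I ≤ J) hbz)
  have h2 : (bb : R) - (z : R) ∈ I := (inf_le_right : J ⊓ I ≤ I) hbz
  have h3 : ((h z : GolombSpace R) : R) - (u : R) * (z : R) =
      (u : R) * ((bb : R) - (z : R)) - (((h bb : GolombSpace R) : R)
        - ((h z : GolombSpace R) : R)) := by
    rw [hub]; ring
  rw [h3]
  exact I.sub_mem (I.mul_mem_left _ h2) h1

/-- The set of "good" maximal ideals from the hypothesis `hinf`. -/
def goodSet (R : Type*) [CommRing R] : Set (Ideal R) :=
  {P : Ideal R | P.IsMaximal ∧ ∃ n : ℕ, 1 ≤ n ∧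
      Function.Injective fun u : Rˣ => Ideal.Quotient.mk (P ^ n) (u : R)}

/-- Globally, `h z` is a unit multiple of `z`. -/
lemma h_global_unit (hmem : h ∈ golombLambda R) (had : HasAlmostDirichlet R)
    (hps : PowerSeparated R) (hinf : (goodSet R).Infinite) (z : GolombSpace R) :
    ∃ u : Rˣ, ((h z : GolombSpace R) : R) = (u : R) * (z : R) := by
  have hgoodmax : ∀ P ∈ goodSet R, P.IsMaximal := fun P hP => hP.1
  -- pick a base good prime avoiding the support of z
  have hz2 := z.2
  have hdiff : ((goodSet R) \ {M : Ideal R | M.IsMaximal ∧ (z : R) ∈ M}).Infinite :=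
    hinf.diff (supp_finite hz2)
  obtain ⟨Q₀, hQ₀good, hQ₀n⟩ := hdiff.nonempty
  obtain ⟨hQ₀max, n₀, hn₀1, hinj₀⟩ := hQ₀good
  have hzQ₀ : (z : R) ∉ Q₀ := fun hmem' => hQ₀n ⟨hQ₀max, hmem'⟩
  have hQ₀bot : Q₀ ≠ ⊥ := ne_bot_of_infinite_maximals hinf hgoodmax hQ₀max
  obtain ⟨u₀, hu₀⟩ := h_approx_unit hmem had hps z (pow_ne_bot' hQ₀bot n₀)
    (cop_pow hQ₀max hzQ₀ n₀)
  -- claim : for every good prime avoiding z, h z ≡ u₀ z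
  have hclaim : ∀ Q ∈ goodSet R, (z : R) ∉ Q →
      ((h z : GolombSpace R) : R) - (u₀ : R) * (z : R) ∈ Q := by
    intro Q hQgood hzQ
    obtain ⟨hQmax, n, hn1, hinj⟩ := hQgood
    have hQbot : Q ≠ ⊥ := ne_bot_of_infinite_maximals hinf hgoodmax hQmax
    set I : Ideal R := Q₀ ^ n₀ ⊓ Q ^ n with hIdef
    have hI0 : I ≠ ⊥ := inf_ne_bot (pow_ne_bot' hQ₀bot n₀) (pow_ne_bot' hQbot n)
    have hIcop : Ideal.span {(z : R)} ⊔ I = ⊤ :=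
      cop_inf (cop_pow hQ₀max hzQ₀ n₀) (cop_pow hQmax hzQ n)
    obtain ⟨u, hu⟩ := h_approx_unit hmem had hps z hI0 hIcop
    have hu0' : ((h z : GolombSpace R) : R) - (u : R) * (z : R) ∈ Q₀ ^ n₀ :=
      (inf_le_left : I ≤ Q₀ ^ n₀) hu
    have huQ : ((h z : GolombSpace R) : R) - (u : R) * (z : R) ∈ Q ^ n :=
      (inf_le_right : I ≤ Q ^ n) hu
    have huu₀ : u = u₀ := by
      refine unit_eq_of_cong hQ₀max hinj₀ hzQ₀ ?_
      have heq : (u : R) * (z : R) - (u₀ : R) * (z : R) =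
          (((h z : GolombSpace R) : R) - (u₀ : R) * (z : R)) -
            (((h z : GolombSpace R) : R) - (u : R) * (z : R)) := by ring
      rw [heq]
      exact (Q₀ ^ n₀).sub_mem hu₀ hu0'
    rw [← huu₀]
    exact Ideal.pow_le_self (by omega) huQ
  -- conclude
  refine ⟨u₀, ?_⟩
  by_contra hne
  have hw0 : ((h z : GolombSpace R) : R) - (u₀ : R) * (z : R) ≠ 0 := sub_ne_zero.mpr hne
  have hbig : ((goodSet R) \ ({M : Ideal R | M.IsMaximal ∧ (z : R) ∈ M} ∪
      {M : Ideal R | M.IsMaximal ∧ ((h z : GolombSpace R) : R) - (u₀ : R) * (z : R) ∈ M})).Infinite :=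
    hinf.diff ((supp_finite hz2).union (supp_finite hw0))
  obtain ⟨Q, hQgood, hQn⟩ := hbig.nonempty
  have hQmax := hQgood.1
  have hzQ : (z : R) ∉ Q := fun hmem' => hQn (Or.inl ⟨hQmax, hmem'⟩)
  exact hQn (Or.inr ⟨hQmax, hclaim Q hQgood hzQ⟩)

end GolombAux
namespace GolombAux

variable {R : Type*} [CommRing R] [IsDomain R] [IsDedekindDomain R]
variable {h : Equiv.Perm (GolombSpace R)}

/-- Local constancy of the unit: around each point there is a coprime coset on which the
associated unit is constant. -/
lemma unit_locally_constant (hmem : h ∈ golombLambda R) (had : HasAlmostDirichlet R)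
    (hps : PowerSeparated R) (hinf : (goodSet R).Infinite)
    (uf : GolombSpace R → Rˣ)
    (huf : ∀ z : GolombSpace R, ((h z : GolombSpace R) : R) = (uf z : R) * (z : R))
    (z : GolombSpace R) :
    ∃ A : Ideal R, A ≠ ⊥ ∧ A ≠ ⊤ ∧ Ideal.span {(z : R)} ⊔ A = ⊤ ∧
      ∀ z' : GolombSpace R, (z' : R) - (z : R) ∈ A → uf z' = uf z := by
  have hgoodmax : ∀ P ∈ goodSet R, P.IsMaximal := fun P hP => hP.1
  have hdiff : ((goodSet R) \ {M : Ideal R | M.IsMaximal ∧ (z : R) ∈ M}).Infinite :=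
    hinf.diff (supp_finite z.2)
  obtain ⟨Q, hQgood, hQn⟩ := hdiff.nonempty
  obtain ⟨hQmax, n, hn1, hinj⟩ := hQgood
  have hzQ : (z : R) ∉ Q := fun hmem' => hQn ⟨hQmax, hmem'⟩
  have hQbot : Q ≠ ⊥ := ne_bot_of_infinite_maximals hinf hgoodmax hQmax
  obtain ⟨J, hJ0, hJcop, htrans⟩ := transfer hmem z (pow_ne_bot' hQbot n)
    (cop_pow hQmax hzQ n)
  refine ⟨J ⊓ Q ^ n, inf_ne_bot hJ0 (pow_ne_bot' hQbot n), ?_,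
    cop_inf hJcop (cop_pow hQmax hzQ n), ?_⟩
  · intro htop
    have h1 : (1 : R) ∈ J ⊓ Q ^ n := by rw [htop]; trivial
    have h2 : (1 : R) ∈ Q := Ideal.pow_le_self (by omega) ((inf_le_right : J ⊓ Q^n ≤ Q^n) h1)
    exact hQmax.ne_top ((Ideal.eq_top_iff_one Q).mpr h2)
  · intro z' hz'
    have hJz : (z' : R) - (z : R) ∈ J := (inf_le_left : J ⊓ Q^n ≤ J) hz'
    have hQz : (z' : R) - (z : R) ∈ Q ^ n := (inf_le_right : J ⊓ Q^n ≤ Q^n) hz'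
    have hout : ((h z' : GolombSpace R) : R) - ((h z : GolombSpace R) : R) ∈ Q ^ n :=
      htrans z' hJz
    refine unit_eq_of_cong hQmax hinj hzQ ?_
    have heq : (uf z' : R) * (z : R) - (uf z : R) * (z : R) =
        (((h z' : GolombSpace R) : R) - ((h z : GolombSpace R) : R))
          - (uf z' : R) * ((z' : R) - (z : R)) := by
      rw [huf z', huf z]; ring
    rw [heq]
    exact (Q ^ n).sub_mem hout ((Q ^ n).mul_mem_left _ hQz)

/-- Main rigidity: the subgroup `Λ₁(R)` is trivial. -/
lemma lambdaOne_eq_bot (had : HasAlmostDirichlet R) (hps : PowerSeparated R)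
    (hinf : (goodSet R).Infinite) : golombLambdaOne R = ⊥ := by
  rw [Subgroup.eq_bot_iff_forall]
  intro h hh
  have hmem : h ∈ golombLambda R := hh.1
  have h1 : h (⟨1, one_ne_zero⟩ : GolombSpace R) = (⟨1, one_ne_zero⟩ : GolombSpace R) := hh.2
  -- the global unit function
  choose uf huf using fun z : GolombSpace R => h_global_unit hmem had hps hinf z
  -- uf 1 = 1
  set one : GolombSpace R := ⟨1, one_ne_zero⟩ with honedef
  have hu1 : uf one = 1 := by
    have : ((h one : GolombSpace R) : R) = 1 := by rw [h1]
    have h2 : (uf one : R) * 1 = 1 := by rw [← huf one, this]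
    ext
    simpa using h2
  -- local constancy cosets
  choose A hA0 hAtop hAcop hAconst using
    unit_locally_constant hmem had hps hinf uf huf
  -- all units are 1
  have hallone : ∀ z : GolombSpace R, uf z = 1 := by
    intro w
    -- connect w to 1 through an element of A 1 * A w
    have hprod0 : A one * A w ≠ ⊥ := by
      rw [ne_eq, Ideal.mul_eq_bot]
      push_neg
      exact ⟨hA0 one, hA0 w⟩
    obtain ⟨t₀, ht₀mem, ht₀0⟩ := Submodule.exists_mem_ne_zero_of_ne_bot hprod0
    set t : GolombSpace R := ⟨t₀, ht₀0⟩ with htdef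
    -- the coset of t meets both cosets
    have hlink : ∀ z : GolombSpace R, t₀ ∈ A z → uf t = uf z := by
      intro z ht₀z
      have hsup : A t ⊔ A z = ⊤ := by
        by_contra hne
        obtain ⟨M, hM, hle⟩ := Ideal.exists_le_maximal _ hne
        have htM : t₀ ∈ M := le_trans le_sup_right hle ht₀z
        exact (cop_iff.mp (hAcop t)) M hM htM (le_trans le_sup_left hle)
      obtain ⟨s, hst, hsz⟩ := crt hsup (t : R) (z : R)
      have hs0 : s ≠ 0 := by
        rintro rfl
        have : (z : R) ∈ A z := by
          have := (A z).neg_mem hsz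
          simpa using this
        have : Ideal.span {(z : R)} ⊔ A z = A z := by
          rw [sup_eq_right, Ideal.span_le, Set.singleton_subset_iff]
          exact this
        rw [hAcop z] at this
        exact hAtop z this.symm
      have e1 : uf ⟨s, hs0⟩ = uf t := hAconst t ⟨s, hs0⟩ hst
      have e2 : uf ⟨s, hs0⟩ = uf z := hAconst z ⟨s, hs0⟩ hsz
      rw [← e1, e2]
    have l1 : uf t = uf one := hlink one (Ideal.mul_le_left ht₀mem)
    have l2 : uf t = uf w := hlink w (Ideal.mul_le_right ht₀mem)
    rw [← l2, l1, hu1]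
  -- conclude h = 1
  ext z
  have := huf z
  rw [hallone z] at this
  simpa using congrArg Subtype.val (show h z = z from Subtype.ext (by simpa using this))

end GolombAux
namespace GolombAux

variable {R : Type*} [CommRing R] [IsDomain R] [IsDedekindDomain R]

/-- Multiplication by a unit, as a permutation of the Golomb space. -/
def mulPerm (u : Rˣ) : Equiv.Perm (GolombSpace R) where
  toFun x := ⟨(u : R) * x, mul_ne_zero u.ne_zero x.2⟩
  invFun x := ⟨((u⁻¹ : Rˣ) : R) * x, mul_ne_zero (u⁻¹).ne_zero x.2⟩
  left_inv x := by
    apply Subtype.ext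
    show ((u⁻¹ : Rˣ) : R) * ((u : R) * x) = x
    rw [← mul_assoc, Units.inv_mul, one_mul]
  right_inv x := by
    apply Subtype.ext
    show (u : R) * (((u⁻¹ : Rˣ) : R) * x) = x
    rw [← mul_assoc, Units.mul_inv, one_mul]

lemma mulPerm_apply (u : Rˣ) (x : GolombSpace R) :
    ((mulPerm u x : GolombSpace R) : R) = (u : R) * x := rfl

lemma mulPerm_preimage (u : Rˣ) (a : R) (I : Ideal R) :
    (mulPerm u (R := R)) ⁻¹' {y : GolombSpace R | ∃ i ∈ I, (y : R) = a + i} =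
      coset (((u⁻¹ : Rˣ) : R) * a) I := by
  ext x
  constructor
  · rintro ⟨i, hi, hx⟩
    refine ⟨((u⁻¹ : Rˣ) : R) * i, I.mul_mem_left _ hi, ?_⟩
    have hx2 : (u : R) * (x : R) = a + i := hx
    have : (x : R) = ((u⁻¹ : Rˣ) : R) * ((u : R) * (x : R)) := by
      rw [← mul_assoc, Units.inv_mul, one_mul]
    rw [this, hx2, mul_add]
  · rintro ⟨i, hi, hx⟩
    refine ⟨(u : R) * i, I.mul_mem_left _ hi, ?_⟩
    show (u : R) * (x : R) = a + (u : R) * i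
    rw [hx, mul_add, ← mul_assoc, Units.mul_inv, one_mul]

lemma mulPerm_continuous (u : Rˣ) : Continuous (mulPerm u (R := R)) := by
  rw [golombTopology_eq (R := R)]
  rw [continuous_generateFrom_iff]
  rintro s ⟨a, I, ha, hI, hcop, rfl⟩
  rw [mulPerm_preimage]
  have ha' : ((u⁻¹ : Rˣ) : R) * a ≠ 0 := mul_ne_zero (u⁻¹).ne_zero ha
  have hspan : Ideal.span {((u⁻¹ : Rˣ) : R) * a} = Ideal.span {a} :=
    Ideal.span_singleton_mul_left_unit (Units.isUnit _) a
  have hcop' : Ideal.span {((u⁻¹ : Rˣ) : R) * a} ⊔ I = ⊤ := by rw [hspan]; exact hcop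
  exact coset_open ha' hI hcop'

lemma mulPerm_mem_lambda (u : Rˣ) : mulPerm u (R := R) ∈ golombLambda R := by
  refine ⟨mulPerm_continuous u, ?_, ?_⟩
  · have : ⇑(mulPerm u (R := R)).symm = ⇑(mulPerm u⁻¹ (R := R)) := by
      funext x
      apply Subtype.ext
      rfl
    rw [this]
    exact mulPerm_continuous u⁻¹
  · intro P hP
    ext x
    constructor
    · rintro ⟨w, hw, rfl⟩
      exact P.mul_mem_left _ hw
    · intro hx
      refine ⟨mulPerm u⁻¹ x, ?_, ?_⟩
      · exact P.mul_mem_left _ hx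
      · apply Subtype.ext
        show (u : R) * (((u⁻¹ : Rˣ) : R) * x) = (x : R)
        rw [← mul_assoc, Units.mul_inv, one_mul]

/-- Multiplication by units, as a group homomorphism into `Λ(R)`. -/
def mulHom : Rˣ →* (golombLambda R) where
  toFun u := ⟨mulPerm u, mulPerm_mem_lambda u⟩
  map_one' := by
    apply Subtype.ext
    apply Equiv.ext
    intro x
    apply Subtype.ext
    show ((1 : Rˣ) : R) * x = (x : R)
    rw [Units.val_one, one_mul]
  map_mul' u v := by
    apply Subtype.ext
    apply Equiv.ext
    intro x
    apply Subtype.ext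
    show ((u * v : Rˣ) : R) * x = (u : R) * ((v : R) * (x : R))
    rw [Units.val_mul, mul_assoc]

lemma mulHom_bijective (had : HasAlmostDirichlet R) (hps : PowerSeparated R)
    (hinf : (goodSet R).Infinite) : Function.Bijective (mulHom (R := R)) := by
  constructor
  · intro u v huv
    have h1 : (mulPerm u (R := R)) ⟨1, one_ne_zero⟩ = (mulPerm v (R := R)) ⟨1, one_ne_zero⟩ := by
      rw [show mulPerm u (R := R) = ((mulHom u : golombLambda R) : Equiv.Perm (GolombSpace R)) from rfl,
        show mulPerm v (R := R) = ((mulHom v : golombLambda R) : Equiv.Perm (GolombSpace R)) from rfl, huv]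
    have h2 : (u : R) * 1 = (v : R) * 1 := congrArg Subtype.val h1
    ext
    simpa using h2
  · rintro ⟨f, hf⟩
    -- f 1 is a unit
    have hfone : ∀ P : Ideal R, P.IsPrime →
        (((f ⟨1, one_ne_zero⟩ : GolombSpace R) : R) ∈ P ↔ (1 : R) ∈ P) :=
      fun P hP => lam_mem_iff hf hP ⟨1, one_ne_zero⟩
    have hunit : IsUnit ((f ⟨1, one_ne_zero⟩ : GolombSpace R) : R) := by
      by_contra hnu
      have hne : Ideal.span {((f ⟨1, one_ne_zero⟩ : GolombSpace R) : R)} ≠ ⊤ := by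
        rw [ne_eq, Ideal.span_singleton_eq_top]; exact hnu
      obtain ⟨M, hM, hle⟩ := Ideal.exists_le_maximal _ hne
      have : ((f ⟨1, one_ne_zero⟩ : GolombSpace R) : R) ∈ M := hle (Ideal.subset_span rfl)
      have h1M : (1 : R) ∈ M := (hfone M hM.isPrime).mp this
      exact hM.ne_top ((Ideal.eq_top_iff_one M).mpr h1M)
    set v : Rˣ := hunit.unit with hvdef
    refine ⟨v, ?_⟩
    -- g := (mulHom v)⁻¹ * f is in Λ₁ = ⊥
    have hginL : (mulPerm v (R := R))⁻¹ * f ∈ golombLambda R :=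
      (golombLambda R).mul_mem ((golombLambda R).inv_mem (mulPerm_mem_lambda v)) hf
    have hg1 : ((mulPerm v (R := R))⁻¹ * f) ⟨1, one_ne_zero⟩ = (⟨1, one_ne_zero⟩ : GolombSpace R) := by
      have happ : ((mulPerm v (R := R))⁻¹ * f) ⟨1, one_ne_zero⟩ =
          (mulPerm v (R := R)).symm (f ⟨1, one_ne_zero⟩) := rfl
      rw [happ]
      apply (Equiv.symm_apply_eq _).mpr
      apply Subtype.ext
      show ((f ⟨1, one_ne_zero⟩ : GolombSpace R) : R) = (v : R) * 1
      rw [mul_one, hvdef, IsUnit.unit_spec]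
    have hbot := lambdaOne_eq_bot had hps hinf (R := R)
    have hgmem : (mulPerm v (R := R))⁻¹ * f ∈ golombLambdaOne R := ⟨hginL, hg1⟩
    rw [hbot] at hgmem
    have hgeq : (mulPerm v (R := R))⁻¹ * f = 1 := Subgroup.mem_bot.mp hgmem
    have hfeq : f = mulPerm v (R := R) := by
      have := congrArg (fun g => (mulPerm v (R := R)) * g) hgeq
      simpa [← mul_assoc] using this
    apply Subtype.ext
    show mulPerm v (R := R) = f
    rw [hfeq]

end GolombAux
/-- Let `R` be a Dedekind domain with torsion class group which has the almost
Dirichlet property and is power separated, and suppose there are infinitely many maximal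
ideals `P` of `R` admitting an `n_P ≥ 1` with `U(R) → R/P^{n_P}` injective. Then `Λ₁(R)` is
trivial and `Λ(R)` is isomorphic to the unit group `U(R)`. -/
theorem golombLambdaOne_trivial_and_golombLambda_iso_units (R : Type*)
    [CommRing R] [IsDomain R] [IsDedekindDomain R]
    (htors : ∀ c : ClassGroup R, IsOfFinOrder c)
    (had : HasAlmostDirichlet R) (hps : PowerSeparated R)
    (hinf : {P : Ideal R | P.IsMaximal ∧ ∃ n : ℕ, 1 ≤ n ∧
      Function.Injective fun u : Rˣ => Ideal.Quotient.mk (P ^ n) (u : R)}.Infinite) :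
    golombLambdaOne R = ⊥ ∧ Nonempty (golombLambda R ≃* Rˣ) := by
  have hinf' : (GolombAux.goodSet R).Infinite := hinf
  refine ⟨GolombAux.lambdaOne_eq_bot had hps hinf', ?_⟩
  exact ⟨(MulEquiv.ofBijective GolombAux.mulHom
    (GolombAux.mulHom_bijective had hps hinf')).symm⟩

end
end

section
/- Let K be a field of characteristic p > 0 and let g ∈ K[X] be an irreducible polynomial. Then the following are equivalent: (i) ⟨g⟩ is not a discrete subspace of the Golomb space G(K[X]); (ii) for all s₁, s₂ ∈ K, either g(s₁) = 0, or g(s₂) = 0, or g(s₁)/g(s₂) is a root of unity; (iii) K is algebraic over its prime field 𝔽_p. -/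
open Polynomial Filter

noncomputable section

lemma golomb_open_contains_coset {R : Type*} [CommRing R] [IsDomain R]
    {U : Set (GolombSpace R)} (hU : IsOpen U) {g : R} (hg0 : g ≠ 0)
    (hgU : (⟨g, hg0⟩ : GolombSpace R) ∈ U) :
    ∃ J : Ideal R, J ≠ ⊥ ∧ Ideal.span {g} ⊔ J = ⊤ ∧
      ∀ j ∈ J, ∀ (h' : g + j ≠ 0), (⟨g + j, h'⟩ : GolombSpace R) ∈ U := by
  have hgen : TopologicalSpace.GenerateOpen
      {S : Set (GolombSpace R) | ∃ (x : R) (I : Ideal R), x ≠ 0 ∧ I ≠ ⊥ ∧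
        Ideal.span {x} ⊔ I = ⊤ ∧ S = {y : GolombSpace R | ∃ i ∈ I, (y : R) = x + i}} U := hU
  clear hU
  induction hgen with
  | basic S hS =>
    obtain ⟨x, I, hx0, hIbot, hco, rfl⟩ := hS
    obtain ⟨i₀, hi₀, hgeq⟩ := hgU
    refine ⟨I, hIbot, ?_, ?_⟩
    · rw [eq_top_iff]
      rw [← hco]
      apply sup_le
      · rw [Ideal.span_le, Set.singleton_subset_iff]
        have hgeq' : g = x + i₀ := hgeq
        have hxmem : x = g - i₀ := by rw [hgeq']; ring
        rw [hxmem]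
        exact sub_mem (Ideal.mem_sup_left (Ideal.subset_span rfl))
          (Ideal.mem_sup_right hi₀)
      · exact le_sup_right
    · intro j hj h'
      have hgeq' : g = x + i₀ := hgeq
      show ∃ i ∈ I, g + j = x + i
      exact ⟨i₀ + j, add_mem hi₀ hj, by rw [hgeq']; ring⟩
  | univ =>
    refine ⟨⊤, ?_, by simp, fun j _ h' => trivial⟩
    intro hcon
    exact one_ne_zero ((Submodule.mem_bot R).mp (hcon ▸ Submodule.mem_top))
  | inter U V hUo hVo ihU ihV =>
    obtain ⟨J₁, hJ₁, hco₁, hmem₁⟩ := ihU hgU.1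
    obtain ⟨J₂, hJ₂, hco₂, hmem₂⟩ := ihV hgU.2
    refine ⟨J₁ * J₂, ?_, ?_, ?_⟩
    · rw [Ne, Ideal.mul_eq_bot]
      tauto
    · rw [← Ideal.isCoprime_iff_sup_eq] at hco₁ hco₂ ⊢
      exact IsCoprime.mul_right hco₁ hco₂
    · intro j hj h'
      exact ⟨hmem₁ j (Ideal.mul_le_left hj) h', hmem₂ j (Ideal.mul_le_right hj) h'⟩
  | sUnion 𝒯 hT ih =>
    obtain ⟨W, hW, hgW⟩ := hgU
    obtain ⟨J, hJ, hco, hmem⟩ := ih W hW hgW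
    exact ⟨J, hJ, hco, fun j hj h' => ⟨W, hW, hmem j hj h'⟩⟩

lemma aux_pow_eq_one' {p : ℕ} [Fact p.Prime] {Q : Type*} [CommRing Q] [Algebra (ZMod p) Q]
    {x : Q} (hx : IsIntegral (ZMod p) x) (hu : IsUnit x) : ∃ k, 1 ≤ k ∧ x ^ k = 1 := by
  set T := Algebra.adjoin (ZMod p) {x} with hT
  have hxT : x ∈ T := Algebra.subset_adjoin rfl
  have : Module.Finite (ZMod p) T := ⟨(Submodule.fg_top _).mpr hx.fg_adjoin_singleton⟩
  have : Finite T := Module.finite_of_finite (ZMod p)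
  have hni : ¬ Function.Injective (fun n : ℕ => (⟨x ^ n, pow_mem hxT n⟩ : T)) :=
    not_injective_infinite_finite _
  rw [Function.not_injective_iff] at hni
  obtain ⟨m, n, hmn, hne⟩ := hni
  wlog hlt : m < n generalizing m n
  · exact this n m (Subtype.ext_iff.mpr (Subtype.ext_iff.mp hmn).symm) (Ne.symm hne) (by omega)
  have hx' : x ^ m = x ^ n := Subtype.ext_iff.mp hmn
  refine ⟨n - m, by omega, ?_⟩
  have : x ^ m * x ^ (n - m) = x ^ m * 1 := by
    rw [mul_one, ← pow_add]; rw [hx']; congr 1; omega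
  exact (hu.pow m).mul_left_cancel this

lemma aux_C_not_discrete (K : Type*) [Field K] (p : ℕ) [Fact p.Prime]
    [CharP K p] [Algebra (ZMod p) K] (g : K[X]) (hg : Irreducible g)
    (hC : Algebra.IsAlgebraic (ZMod p) K) :
    ¬ DiscreteTopology (golombPow (R := Polynomial K) g) := by
  intro hdisc
  have hg0 : g ≠ 0 := hg.ne_zero
  have hgd : 1 ≤ g.natDegree :=
    natDegree_pos_iff_degree_pos.mpr (degree_pos_of_irreducible hg)
  have hmem : (⟨g, hg0⟩ : GolombSpace K[X]) ∈ golombPow g :=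
    ⟨1, 1, isUnit_one, le_refl 1, by simp⟩
  set a₀ : ↥(golombPow (R := Polynomial K) g) := ⟨⟨g, hg0⟩, hmem⟩ with ha₀
  have hopen : IsOpen ({a₀} : Set ↥(golombPow (R := Polynomial K) g)) := isOpen_discrete _
  rw [isOpen_induced_iff] at hopen
  obtain ⟨U, hU, hUeq⟩ := hopen
  have hgU : (⟨g, hg0⟩ : GolombSpace K[X]) ∈ U := by
    have : a₀ ∈ Subtype.val ⁻¹' U := by rw [hUeq]; exact rfl
    exact this
  obtain ⟨J, hJbot, hJco, hJmem⟩ := golomb_open_contains_coset hU hg0 hgU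
  -- pass to the quotient
  set Q := Polynomial K ⧸ J with hQ
  have haev : ∀ q : K[X], Polynomial.aeval (Ideal.Quotient.mk J (X : K[X])) q
      = Ideal.Quotient.mk J q := by
    intro q
    rw [aeval_def]
    have h1 : algebraMap K Q = (Ideal.Quotient.mk J).comp (C : K →+* K[X]) := rfl
    rw [h1]
    rw [← hom_eval₂ (g := Ideal.Quotient.mk J)]
    rw [eval₂_C_X]
  -- mk g is a unit
  have hunit : IsUnit (Ideal.Quotient.mk J g) := by
    have h1 : (1 : K[X]) ∈ Ideal.span {g} ⊔ J := by rw [hJco]; trivial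
    rw [Submodule.mem_sup] at h1
    obtain ⟨y, hy, z, hz, hyz⟩ := h1
    rw [Ideal.mem_span_singleton'] at hy
    obtain ⟨a, rfl⟩ := hy
    refine IsUnit.of_mul_eq_one (Ideal.Quotient.mk J a) ?_
    have h2 : (Ideal.Quotient.mk J) (a * g + z) = 1 := by rw [hyz]; simp
    rw [map_add, Ideal.Quotient.eq_zero_iff_mem.mpr hz, add_zero, map_mul] at h2
    rw [mul_comm] at h2
    exact h2
  -- mk X is integral over K
  obtain ⟨f, hfJ, hf0⟩ := (Submodule.ne_bot_iff J).mp hJbot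
  have hXint : IsIntegral K (Ideal.Quotient.mk J (X : K[X])) := by
    refine ⟨f * C f.leadingCoeff⁻¹, monic_mul_leadingCoeff_inv hf0, ?_⟩
    have h3 := haev (f * C f.leadingCoeff⁻¹)
    rw [aeval_def] at h3
    rw [h3]
    exact Ideal.Quotient.eq_zero_iff_mem.mpr (Ideal.mul_mem_right _ _ hfJ)
  have hgmem : (Ideal.Quotient.mk J g) ∈
      Algebra.adjoin K {(Ideal.Quotient.mk J (X : K[X]))} := by
    rw [Algebra.adjoin_singleton_eq_range_aeval]
    exact ⟨g, haev g⟩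
  have hgint : IsIntegral K (Ideal.Quotient.mk J g) :=
    IsIntegral.of_mem_of_fg _ hXint.fg_adjoin_singleton _ hgmem
  have hKint : Algebra.IsIntegral (ZMod p) K := Algebra.IsAlgebraic.isIntegral
  have hgint' : IsIntegral (ZMod p) (Ideal.Quotient.mk J g) := isIntegral_trans _ hgint
  obtain ⟨k, hk1, hk⟩ := aux_pow_eq_one' hgint' hunit
  have hmemJ : g ^ (k + 1) - g ∈ J := by
    rw [← Ideal.Quotient.eq_zero_iff_mem, map_sub, map_pow, pow_succ, hk, one_mul, sub_self]
  have h' : g + (g ^ (k + 1) - g) ≠ 0 := by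
    rw [add_sub_cancel]
    exact pow_ne_zero _ hg0
  have hyU : (⟨g + (g ^ (k + 1) - g), h'⟩ : GolombSpace K[X]) ∈ U := hJmem _ hmemJ h'
  have hyPow : (⟨g + (g ^ (k + 1) - g), h'⟩ : GolombSpace K[X]) ∈ golombPow g :=
    ⟨1, k + 1, isUnit_one, by omega, by push_cast; ring⟩
  have hfin : (⟨⟨g + (g ^ (k + 1) - g), h'⟩, hyPow⟩ : ↥(golombPow (R := Polynomial K) g))
      ∈ Subtype.val ⁻¹' U := hyU
  rw [hUeq] at hfin
  have heq : g + (g ^ (k + 1) - g) = g := by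
    have := Subtype.ext_iff.mp (Set.mem_singleton_iff.mp hfin)
    exact Subtype.ext_iff.mp this
  rw [add_sub_cancel] at heq
  have hdeg := congrArg natDegree heq
  rw [natDegree_pow] at hdeg
  have h2 : 2 * g.natDegree ≤ (k + 1) * g.natDegree := Nat.mul_le_mul_right _ (by omega)
  omega

lemma aux_notB_discrete (K : Type*) [Field K] (g : K[X]) (hg : Irreducible g)
    (s₁ s₂ : K) (h1 : g.eval s₁ ≠ 0) (h2 : g.eval s₂ ≠ 0)
    (hr : ∀ k : ℕ, 1 ≤ k → (g.eval s₁ / g.eval s₂) ^ k ≠ 1) :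
    DiscreteTopology (golombPow (R := Polynomial K) g) := by
  have hg0 : g ≠ 0 := hg.ne_zero
  set r : K := g.eval s₁ / g.eval s₂ with hrdef
  have hrne : r ≠ 0 := div_ne_zero h1 h2
  have hkey : ∀ m n : ℕ, r ^ m = r ^ n → m = n := by
    intro m n hmn
    by_contra hne
    wlog hlt : m < n generalizing m n
    · exact this n m hmn.symm (Ne.symm hne) (by omega)
    have : r ^ m * r ^ (n - m) = r ^ m * 1 := by
      rw [mul_one, ← pow_add, hmn]; congr 1; omega
    exact hr (n - m) (by omega) (mul_left_cancel₀ (pow_ne_zero _ hrne) this)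
  rw [discreteTopology_iff_isOpen_singleton]
  rintro ⟨⟨q, hq0⟩, hqmem⟩
  obtain ⟨u, n, hu, hn, hque⟩ := hqmem
  obtain ⟨c, hcu, hcC⟩ := Polynomial.isUnit_iff.mp hu
  have hc0 : c ≠ 0 := hcu.ne_zero
  simp only at hque
  set f : K[X] := (X - C s₁) * (X - C s₂) with hf
  have hf0 : f ≠ 0 := ((monic_X_sub_C s₁).mul (monic_X_sub_C s₂)).ne_zero
  -- coprimality of q and f
  have hcop : IsCoprime q f := by
    have hco1 : IsCoprime g (X - C s₁) :=
      ((irreducible_X_sub_C s₁).coprime_iff_not_dvd.mpr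
        (fun hdvd => h1 (dvd_iff_isRoot.mp hdvd))).symm
    have hco2 : IsCoprime g (X - C s₂) :=
      ((irreducible_X_sub_C s₂).coprime_iff_not_dvd.mpr
        (fun hdvd => h2 (dvd_iff_isRoot.mp hdvd))).symm
    have hgf : IsCoprime g f := hco1.mul_right hco2
    have huf : IsCoprime u f := by
      obtain ⟨v, hv⟩ := hu.exists_left_inv
      exact ⟨v, 0, by rw [hv]; ring⟩
    rw [hque]
    exact huf.mul_left (hgf.pow_left)
  rw [isOpen_induced_iff]
  refine ⟨{y : GolombSpace K[X] | ∃ i ∈ Ideal.span {f}, (y : K[X]) = q + i}, ?_, ?_⟩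
  · exact TopologicalSpace.GenerateOpen.basic _
      ⟨q, Ideal.span {f}, hq0, by rwa [Ne, Ideal.span_singleton_eq_bot], by
        rw [← Ideal.isCoprime_iff_sup_eq, Ideal.isCoprime_span_singleton_iff]
        exact hcop, rfl⟩
  · rw [Set.eq_singleton_iff_unique_mem]
    constructor
    · exact ⟨0, Submodule.zero_mem _, by rw [add_zero]⟩
    · rintro ⟨⟨b, hb0⟩, hbmem⟩ ⟨i, hi, hbeq⟩
      obtain ⟨u', m, hu', hm, hbe⟩ := hbmem
      obtain ⟨c', hcu', hcC'⟩ := Polynomial.isUnit_iff.mp hu'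
      have hc'0 : c' ≠ 0 := hcu'.ne_zero
      simp only at hbe hbeq
      -- b ≡ q mod (X - sᵢ)
      have hdvd : f ∣ b - q := by
        rw [hbeq]
        simpa using (Ideal.mem_span_singleton.mp hi)
      have heval : ∀ s : K, (X - C s) ∣ f → b.eval s = q.eval s := by
        intro s hsf
        have : (X - C s) ∣ b - q := hsf.trans hdvd
        have := dvd_iff_isRoot.mp this
        rw [IsRoot, eval_sub] at this
        exact sub_eq_zero.mp this
      have he1 : b.eval s₁ = q.eval s₁ := heval s₁ (dvd_mul_right _ _)
      have he2 : b.eval s₂ = q.eval s₂ := heval s₂ (dvd_mul_left _ _)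
      rw [hbe, hque, ← hcC, ← hcC', eval_mul, eval_mul, eval_C, eval_C, eval_pow, eval_pow]
        at he1 he2
      set A := g.eval s₁ with hA'
      set B := g.eval s₂ with hB'
      have e1 : c' * (A ^ m * B ^ n) = c * (A ^ n * B ^ n) := by
        calc c' * (A ^ m * B ^ n) = c' * A ^ m * B ^ n := by ring
        _ = c * A ^ n * B ^ n := by rw [he1]
        _ = c * (A ^ n * B ^ n) := by ring
      have e2 : c' * (A ^ n * B ^ m) = c * (A ^ n * B ^ n) := by
        calc c' * (A ^ n * B ^ m) = A ^ n * (c' * B ^ m) := by ring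
        _ = A ^ n * (c * B ^ n) := by rw [he2]
        _ = c * (A ^ n * B ^ n) := by ring
      have hcross := mul_left_cancel₀ hc'0 (e1.trans e2.symm)
      have hrmn : r ^ m = r ^ n := by
        rw [hrdef, div_pow, div_pow, div_eq_div_iff (pow_ne_zero _ h2) (pow_ne_zero _ h2)]
        exact hcross
      have hmn := hkey m n hrmn
      subst hmn
      have hcc : c' = c := mul_right_cancel₀ (pow_ne_zero m h1) he1
      have hbq : b = q := by rw [hbe, hque, ← hcC, ← hcC', hcc]
      exact Subtype.ext (Subtype.ext hbq)


lemma aux_pow_eq_one {p : ℕ} [Fact p.Prime] {Q : Type*} [CommRing Q] [Algebra (ZMod p) Q]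
    {x : Q} (hx : IsIntegral (ZMod p) x) (hu : IsUnit x) : ∃ k, 1 ≤ k ∧ x ^ k = 1 := by
  set T := Algebra.adjoin (ZMod p) {x} with hT
  have hxT : x ∈ T := Algebra.subset_adjoin rfl
  have : Module.Finite (ZMod p) T := ⟨(Submodule.fg_top _).mpr hx.fg_adjoin_singleton⟩
  have : Finite T := Module.finite_of_finite (ZMod p)
  have hni : ¬ Function.Injective (fun n : ℕ => (⟨x ^ n, pow_mem hxT n⟩ : T)) :=
    not_injective_infinite_finite _
  rw [Function.not_injective_iff] at hni
  obtain ⟨m, n, hmn, hne⟩ := hni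
  wlog hlt : m < n generalizing m n
  · exact this n m (Subtype.ext_iff.mpr (Subtype.ext_iff.mp hmn).symm) (Ne.symm hne) (by omega)
  have hx' : x ^ m = x ^ n := Subtype.ext_iff.mp hmn
  refine ⟨n - m, by omega, ?_⟩
  have : x ^ m * x ^ (n - m) = x ^ m * 1 := by
    rw [mul_one, ← pow_add]; rw [hx']; congr 1; omega
  exact (hu.pow m).mul_left_cancel this

lemma aux_isIntegral_of_pow {p : ℕ} [Fact p.Prime] {K : Type*} [Field K] [Algebra (ZMod p) K]
    {x : K} {k : ℕ} (hk : 1 ≤ k) (hx : x ^ k = 1) : IsIntegral (ZMod p) x := by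
  refine ⟨X ^ k - 1, ?_, ?_⟩
  · simpa using monic_X_pow_sub_C (1 : ZMod p) (by omega)
  · simp [hx]

lemma aux_B_iff_C (K : Type*) [Field K] (p : ℕ) [Fact p.Prime]
    [CharP K p] [Algebra (ZMod p) K] (g : K[X]) (hg : Irreducible g) :
    (∀ s₁ s₂ : K, g.eval s₁ = 0 ∨ g.eval s₂ = 0 ∨
        ∃ k : ℕ, 1 ≤ k ∧ (g.eval s₁ / g.eval s₂) ^ k = 1) ↔
      Algebra.IsAlgebraic (ZMod p) K := by
  constructor
  · intro hB
    cases finite_or_infinite K with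
    | inl hfin =>
      have : Module.Finite (ZMod p) K := Module.Finite.of_finite
      have : Algebra.IsIntegral (ZMod p) K := Algebra.IsIntegral.of_finite _ _
      exact Algebra.IsIntegral.isAlgebraic
    | inr hinf =>
      -- infinite K
      have hg0 : g ≠ 0 := hg.ne_zero
      have hd : 1 ≤ g.natDegree :=
        natDegree_pos_iff_degree_pos.mpr (degree_pos_of_irreducible hg)
      set d := g.natDegree with hdd
      -- a point where g does not vanish
      obtain ⟨s₀, hs₀⟩ : ∃ s₀ : K, g.eval s₀ ≠ 0 := by
        have hfin : {x : K | IsRoot g x}.Finite := g.finite_setOf_isRoot hg0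
        obtain ⟨s₀, hs₀⟩ := hfin.infinite_compl.nonempty
        exact ⟨s₀, hs₀⟩
      set F := integralClosure (ZMod p) K with hF
      letI : Field F := (isField_of_isIntegral_of_isField'
        (R := ZMod p) (S := F) (Field.toIsField (ZMod p))).toField
      set h : K[X] := C (g.eval s₀)⁻¹ * g with hh
      have hh0 : h ≠ 0 := mul_ne_zero (by simp [hs₀]) hg0
      have hhd : h.natDegree = d := natDegree_C_mul (inv_ne_zero hs₀)
      have hval : ∀ s : K, h.eval s ∈ F := by
        intro s
        by_cases hzs : g.eval s = 0
        · simp [hh, hzs, Subalgebra.zero_mem]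
        · rcases hB s s₀ with h1 | h2 | ⟨k, hk, hk1⟩
          · exact absurd h1 hzs
          · exact absurd h2 hs₀
          · have : h.eval s = g.eval s / g.eval s₀ := by
              rw [hh]; rw [eval_mul, eval_C, div_eq_mul_inv, mul_comm]
            rw [this]
            exact aux_isIntegral_of_pow hk hk1
      cases finite_or_infinite F with
      | inl hFfin =>
        exfalso
        haveI : Fintype F := Fintype.ofFinite F
        set q := Fintype.card F with hq
        have hq2 : 2 ≤ q := Fintype.one_lt_card
        have hroot : ∀ s : K, (h ^ q - h).eval s = 0 := by
          intro s
          have hcF : (⟨h.eval s, hval s⟩ : F) ^ q = ⟨h.eval s, hval s⟩ := FiniteField.pow_card _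
          have hc := congrArg (Subtype.val) hcF
          simp only [SubmonoidClass.coe_pow] at hc
          simp [eval_sub, eval_pow, hc]
        have hzero : h ^ q = h := by
          rw [← sub_eq_zero]
          apply Polynomial.eq_zero_of_infinite_isRoot
          exact Set.infinite_univ.mono (fun x _ => hroot x)
        have hdeg := congrArg natDegree hzero
        rw [natDegree_pow, hhd] at hdeg
        have : 2 * d ≤ q * d := Nat.mul_le_mul_right d hq2
        omega
      | inr hFinf =>
        classical
        obtain ⟨s, hscard⟩ := Infinite.exists_subset_card_eq F (d + 1)
        have hvs : Set.InjOn (fun i : F => (i : K)) (s : Set F) :=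
          fun a _ b _ hab => Subtype.ext hab
        set r : F → F := fun i => ⟨h.eval (i : K), hval _⟩ with hr
        set f' : Polynomial F := Lagrange.interpolate s id r with hf'
        have halgmap : ∀ i : F, algebraMap F K i = (i : K) := fun i => rfl
        have hmap : h = f'.map (algebraMap F K) := by
          apply eq_of_degrees_lt_of_eval_index_eq (v := fun i : F => (i : K)) s hvs
          · rw [hscard, degree_eq_natDegree hh0, hhd]
            exact_mod_cast Nat.lt_succ_self d
          · exact lt_of_le_of_lt degree_map_le (Lagrange.degree_interpolate_lt r (Set.injOn_id _))
          · intro i hi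
            have h2 : eval i (Lagrange.interpolate s id r) = r i :=
              Lagrange.eval_interpolate_at_node r (Set.injOn_id _) hi
            show eval ((algebraMap (↥F) K) i) h
              = eval ((algebraMap (↥F) K) i) (f'.map (algebraMap (↥F) K))
            rw [eval_map, eval₂_hom, hf', h2]
            rfl
        constructor
        intro t
        have hne : f' - C (⟨h.eval t, hval t⟩ : F) ≠ 0 := by
          intro hcon
          rw [sub_eq_zero] at hcon
          rw [hcon, map_C] at hmap
          rw [hmap, natDegree_C] at hhd
          omega
        have haev : Polynomial.aeval t (f' - C (⟨h.eval t, hval t⟩ : F)) = 0 := by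
          rw [map_sub, aeval_C, aeval_def, ← eval_map, ← hmap]
          simp [halgmap]
        have halgF : IsAlgebraic F t := ⟨_, hne, haev⟩
        exact (isIntegral_trans (R := ZMod p) t halgF.isIntegral).isAlgebraic
  · intro hC s₁ s₂
    by_cases h1 : g.eval s₁ = 0
    · exact Or.inl h1
    by_cases h2 : g.eval s₂ = 0
    · exact Or.inr (Or.inl h2)
    refine Or.inr (Or.inr ?_)
    have halg : IsIntegral (ZMod p) (g.eval s₁ / g.eval s₂) :=
      (hC.isAlgebraic _).isIntegral
    exact aux_pow_eq_one halg (Ne.isUnit (div_ne_zero h1 h2))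


/-- Let `K` be a field of characteristic `p > 0` and `g ∈ K[X]` irreducible.
The following are equivalent: (i) `⟨g⟩` is not a discrete subspace of the Golomb space
`G(K[X])`; (ii) for all `s₁, s₂ ∈ K`, either `g(s₁) = 0`, or `g(s₂) = 0`, or
`g(s₁)/g(s₂)` is a root of unity; (iii) `K` is algebraic over its prime field `𝔽_p`. -/
theorem golombPow_not_discrete_tfae (K : Type*) [Field K] (p : ℕ) [Fact p.Prime]
    [CharP K p] [Algebra (ZMod p) K] (g : K[X]) (hg : Irreducible g) :
    (¬ DiscreteTopology (golombPow (R := Polynomial K) g) ↔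
      ∀ s₁ s₂ : K, g.eval s₁ = 0 ∨ g.eval s₂ = 0 ∨
        ∃ k : ℕ, 1 ≤ k ∧ (g.eval s₁ / g.eval s₂) ^ k = 1) ∧
    ((∀ s₁ s₂ : K, g.eval s₁ = 0 ∨ g.eval s₂ = 0 ∨
        ∃ k : ℕ, 1 ≤ k ∧ (g.eval s₁ / g.eval s₂) ^ k = 1) ↔
      Algebra.IsAlgebraic (ZMod p) K) := by
  have hBC := aux_B_iff_C K p g hg
  refine ⟨?_, hBC⟩
  constructor
  · intro hA
    by_contra hB
    push_neg at hB
    obtain ⟨s₁, s₂, h1, h2, hk⟩ := hB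
    exact hA (aux_notB_discrete K g hg s₁ s₂ h1 h2 hk)
  · intro hB
    exact aux_C_not_discrete K p g hg (hBC.mp hB)


end
end
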